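/- arXiv:1603.02120 — 9 statements merged into one kernel-verified Lean document; each statement's English description precedes it below -/
import Mathlib

section
/- Let A ∈ ℝ^{n×n} be symmetric positive definite, B ∈ ℝ^{m×n} of full row rank, and α > 0. Define P = [[A, ABᵀ], [-B, αI]]. Then P is invertible and P⁻¹ = [[A⁻¹ - BᵀS⁻¹BA⁻¹, -BᵀS⁻¹], [S⁻¹BA⁻¹, S⁻¹]], where S = αI + BBᵀ. -/
open Matrix

/-- For `A` symmetric positive definite, `B` of full row rank and `α > 0`,
the REHSS preconditioner `P = [[A, ABᵀ], [-B, αI]]` is invertible with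
`P⁻¹ = [[A⁻¹ - BᵀS⁻¹BA⁻¹, -BᵀS⁻¹], [S⁻¹BA⁻¹, S⁻¹]]` where `S = αI + BBᵀ`. -/
theorem REHSS_preconditioner_inverse (n m : ℕ)
    (A : Matrix (Fin n) (Fin n) ℝ) (B : Matrix (Fin m) (Fin n) ℝ)
    (hA : A.PosDef) (hB : B.rank = m) (α : ℝ) (hα : 0 < α)
    (S : Matrix (Fin m) (Fin m) ℝ) (hS : S = α • (1 : Matrix (Fin m) (Fin m) ℝ) + B * Bᵀ)
    (P : Matrix (Fin n ⊕ Fin m) (Fin n ⊕ Fin m) ℝ)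
    (hP : P = Matrix.fromBlocks A (A * Bᵀ) (-B) (α • (1 : Matrix (Fin m) (Fin m) ℝ))) :
    IsUnit P ∧
    P⁻¹ = Matrix.fromBlocks (A⁻¹ - Bᵀ * S⁻¹ * B * A⁻¹) (-(Bᵀ * S⁻¹)) (S⁻¹ * B * A⁻¹) S⁻¹ := by
  have hBBt : (B * Bᵀ).PosSemidef := by
    have := Matrix.posSemidef_self_mul_conjTranspose B
    simpa using this
  have h1 : (α • (1 : Matrix (Fin m) (Fin m) ℝ)).PosDef := by
    rw [Matrix.smul_one_eq_diagonal]
    exact Matrix.posDef_diagonal_iff.mpr fun _ => hα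
  have hSpd : S.PosDef := by
    rw [hS]
    exact h1.add_posSemidef hBBt
  have hAA : A * A⁻¹ = 1 := A.mul_nonsing_inv (isUnit_iff_ne_zero.mpr hA.det_pos.ne')
  have hSS : S * S⁻¹ = 1 := S.mul_nonsing_inv (isUnit_iff_ne_zero.mpr hSpd.det_pos.ne')
  have hSS' : α • S⁻¹ + B * Bᵀ * S⁻¹ = 1 := by
    rw [← hSS, hS, add_mul, smul_mul_assoc, one_mul]
  have e1 : A * (A⁻¹ - Bᵀ * S⁻¹ * B * A⁻¹) + A * Bᵀ * (S⁻¹ * B * A⁻¹) = 1 := by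
    rw [mul_sub, hAA]
    have h2 : A * (Bᵀ * S⁻¹ * B * A⁻¹) = A * Bᵀ * (S⁻¹ * B * A⁻¹) := by
      simp only [Matrix.mul_assoc]
    rw [h2, sub_add_cancel]
  have e2 : A * -(Bᵀ * S⁻¹) + A * Bᵀ * S⁻¹ = 0 := by
    rw [Matrix.mul_neg, Matrix.mul_assoc, neg_add_cancel]
  have e3 : (-B) * (A⁻¹ - Bᵀ * S⁻¹ * B * A⁻¹)
      + (α • (1 : Matrix (Fin m) (Fin m) ℝ)) * (S⁻¹ * B * A⁻¹) = 0 := by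
    have h := congrArg (· * (B * A⁻¹)) hSS'
    simp only [Matrix.add_mul, Matrix.smul_mul, Matrix.one_mul, Matrix.mul_assoc] at h
    simp only [Matrix.neg_mul, Matrix.mul_sub, neg_sub, Matrix.smul_mul, Matrix.one_mul,
      Matrix.mul_assoc]
    have h0 : α • (S⁻¹ * (B * A⁻¹)) + B * (Bᵀ * (S⁻¹ * (B * A⁻¹))) - B * A⁻¹ = 0 :=
      sub_eq_zero_of_eq h
    abel_nf at h0 ⊢
    exact h0
  have e4 : (-B) * (-(Bᵀ * S⁻¹)) + (α • (1 : Matrix (Fin m) (Fin m) ℝ)) * S⁻¹ = 1 := by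
    rw [Matrix.neg_mul, Matrix.mul_neg, neg_neg, Matrix.smul_mul, Matrix.one_mul,
      ← Matrix.mul_assoc, add_comm]
    exact hSS'
  have key : P * Matrix.fromBlocks (A⁻¹ - Bᵀ * S⁻¹ * B * A⁻¹) (-(Bᵀ * S⁻¹))
      (S⁻¹ * B * A⁻¹) S⁻¹ = 1 := by
    rw [hP, Matrix.fromBlocks_multiply, e1, e2, e3, e4, Matrix.fromBlocks_one]
  exact ⟨(Matrix.isUnit_iff_isUnit_det P).mpr (Matrix.isUnit_det_of_right_inverse key), Matrix.inv_eq_right_inv key⟩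
end

section
/- With 𝒜 = [[A, Bᵀ], [-B, 0]] and P = [[A, ABᵀ], [-B, αI]] as above, the preconditioned matrix P⁻¹𝒜 equals the block upper triangular matrix [[I, Ã], [0, Â]], where à = A⁻¹Bᵀ - BᵀS⁻¹BA⁻¹Bᵀ, Â = S⁻¹BA⁻¹Bᵀ, and S = αI + BBᵀ. -/
open Matrix

/-- With `𝒜 = [[A, Bᵀ], [-B, 0]]` and `P = [[A, ABᵀ], [-B, αI]]`, the
preconditioned matrix `P⁻¹𝒜` equals the block upper triangular matrix `[[I, Ã], [0, Â]]`,
where `Ã = A⁻¹Bᵀ - BᵀS⁻¹BA⁻¹Bᵀ`, `Â = S⁻¹BA⁻¹Bᵀ` and `S = αI + BBᵀ`. -/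
theorem REHSS_preconditioned_matrix (n m : ℕ)
    (A : Matrix (Fin n) (Fin n) ℝ) (B : Matrix (Fin m) (Fin n) ℝ)
    (hA : A.PosDef) (hB : B.rank = m) (α : ℝ) (hα : 0 < α)
    (S : Matrix (Fin m) (Fin m) ℝ) (hS : S = α • (1 : Matrix (Fin m) (Fin m) ℝ) + B * Bᵀ)
    (P 𝒜 : Matrix (Fin n ⊕ Fin m) (Fin n ⊕ Fin m) ℝ)
    (hP : P = Matrix.fromBlocks A (A * Bᵀ) (-B) (α • (1 : Matrix (Fin m) (Fin m) ℝ)))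
    (h𝒜 : 𝒜 = Matrix.fromBlocks A Bᵀ (-B) (0 : Matrix (Fin m) (Fin m) ℝ)) :
    P⁻¹ * 𝒜 =
      Matrix.fromBlocks (1 : Matrix (Fin n) (Fin n) ℝ)
        (A⁻¹ * Bᵀ - Bᵀ * S⁻¹ * B * A⁻¹ * Bᵀ) 0 (S⁻¹ * B * A⁻¹ * Bᵀ) := by
  have hAdet : IsUnit A.det := hA.det_pos.ne'.isUnit
  have hAinv : A * A⁻¹ = 1 := mul_nonsing_inv A hAdet
  have hAinv' : A⁻¹ * A = 1 := nonsing_inv_mul A hAdet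
  -- S is positive definite
  have hSpd : S.PosDef := by
    rw [hS]
    have h1 : (α • (1 : Matrix (Fin m) (Fin m) ℝ)).PosDef := by
      constructor
      · simp [Matrix.IsHermitian]
      · intro x hx
        exact (Matrix.PosDef.one.smul hα).2 hx
    have h2 : (B * Bᵀ).PosSemidef := by
      have := Matrix.posSemidef_self_mul_conjTranspose B
      simpa [Matrix.conjTranspose_eq_transpose_of_trivial] using this
    exact h1.add_posSemidef h2
  have hSdet : IsUnit S.det := hSpd.det_pos.ne'.isUnit
  have hSinv : S * S⁻¹ = 1 := mul_nonsing_inv S hSdet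
  -- P is invertible
  haveI : Invertible A := A.invertibleOfIsUnitDet hAdet
  have hPdet : IsUnit P.det := by
    rw [hP, Matrix.det_fromBlocks₁₁]
    have : (α • (1 : Matrix (Fin m) (Fin m) ℝ) - -B * ⅟A * (A * Bᵀ)) = S := by
      rw [invOf_eq_nonsing_inv, hS]
      have : -B * A⁻¹ * (A * Bᵀ) = -(B * Bᵀ) := by
        rw [Matrix.neg_mul, Matrix.neg_mul, neg_inj, Matrix.mul_assoc, ← Matrix.mul_assoc A⁻¹ A,
          hAinv', Matrix.one_mul]
      rw [this, sub_neg_eq_add]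
    rw [this]
    exact hAdet.mul hSdet
  -- key: P * target = 𝒜
  have key : P * Matrix.fromBlocks (1 : Matrix (Fin n) (Fin n) ℝ)
        (A⁻¹ * Bᵀ - Bᵀ * S⁻¹ * B * A⁻¹ * Bᵀ) 0 (S⁻¹ * B * A⁻¹ * Bᵀ) = 𝒜 := by
    rw [hP, h𝒜, Matrix.fromBlocks_multiply]
    have e11 : A * (1 : Matrix (Fin n) (Fin n) ℝ) + A * Bᵀ * (0 : Matrix (Fin m) (Fin n) ℝ) = A := by simp
    have e21 : -B * (1 : Matrix (Fin n) (Fin n) ℝ) + α • (1 : Matrix (Fin m) (Fin m) ℝ) * (0 : Matrix (Fin m) (Fin n) ℝ) = -B := by simp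
    have e12 : A * (A⁻¹ * Bᵀ - Bᵀ * S⁻¹ * B * A⁻¹ * Bᵀ) + A * Bᵀ * (S⁻¹ * B * A⁻¹ * Bᵀ)
        = Bᵀ := by
      rw [Matrix.mul_sub, ← Matrix.mul_assoc A A⁻¹ Bᵀ, hAinv, Matrix.one_mul]
      simp only [Matrix.mul_assoc]
      abel
    have e22 : -B * (A⁻¹ * Bᵀ - Bᵀ * S⁻¹ * B * A⁻¹ * Bᵀ)
        + α • (1 : Matrix (Fin m) (Fin m) ℝ) * (S⁻¹ * B * A⁻¹ * Bᵀ) = 0 := by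
      have hsm : α • (1 : Matrix (Fin m) (Fin m) ℝ) * (S⁻¹ * B * A⁻¹ * Bᵀ)
          = α • (S⁻¹ * B * A⁻¹ * Bᵀ) := by simp [Matrix.smul_mul]
      have h2 : α • (S⁻¹ * B * A⁻¹ * Bᵀ) + B * Bᵀ * (S⁻¹ * B * A⁻¹ * Bᵀ)
          = B * A⁻¹ * Bᵀ := by
        have : S * (S⁻¹ * B * A⁻¹ * Bᵀ) = B * A⁻¹ * Bᵀ := by
          simp only [← Matrix.mul_assoc, ← Matrix.mul_assoc S S⁻¹, hSinv, Matrix.one_mul]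
        rw [← this, hS, Matrix.add_mul, Matrix.smul_mul, Matrix.one_mul]
      rw [hsm, Matrix.neg_mul, Matrix.mul_sub]
      have expand : B * (Bᵀ * S⁻¹ * B * A⁻¹ * Bᵀ) = B * Bᵀ * (S⁻¹ * B * A⁻¹ * Bᵀ) := by
        simp only [Matrix.mul_assoc]
      rw [expand]
      rw [show B * (A⁻¹ * Bᵀ) = B * A⁻¹ * Bᵀ by rw [Matrix.mul_assoc]]
      rw [← h2]
      abel
    rw [e11, e12, e21, e22]
  calc P⁻¹ * 𝒜 = P⁻¹ * (P * Matrix.fromBlocks (1 : Matrix (Fin n) (Fin n) ℝ)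
        (A⁻¹ * Bᵀ - Bᵀ * S⁻¹ * B * A⁻¹ * Bᵀ) 0 (S⁻¹ * B * A⁻¹ * Bᵀ)) := by rw [key]
    _ = _ := by rw [← Matrix.mul_assoc, nonsing_inv_mul P hPdet, Matrix.one_mul]
end

section
/- Every eigenvalue of the matrix Â = (αI + BBᵀ)⁻¹ B A⁻¹ Bᵀ is real and positive, where A is symmetric positive definite, B has full row rank, and α > 0. -/
open Matrix
open scoped ComplexOrder

private lemma map_mul_ofReal {a b c : ℕ} (M : Matrix (Fin a) (Fin b) ℝ)
    (N : Matrix (Fin b) (Fin c) ℝ) :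
    (M * N).map Complex.ofReal = M.map Complex.ofReal * N.map Complex.ofReal := by
  ext i j
  simp only [Matrix.map_apply, Matrix.mul_apply]
  push_cast
  rfl

private lemma isUnit_of_rank_eq {k : ℕ} (M : Matrix (Fin k) (Fin k) ℝ) (h : M.rank = k) :
    IsUnit M := by
  rw [← Matrix.mulVec_injective_iff_isUnit]
  have hsurj : Function.Surjective M.mulVecLin := by
    rw [← LinearMap.range_eq_top]
    apply Submodule.eq_top_of_finrank_eq
    rw [← Matrix.rank, h, Module.finrank_fintype_fun_eq_card, Fintype.card_fin]
  have hinj : Function.Injective M.mulVecLin :=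
    (LinearMap.injective_iff_surjective).mpr hsurj
  intro u v huv
  exact hinj (show M.mulVecLin u = M.mulVecLin v by simpa using huv)

private lemma isUnit_map_of_isUnit {k : ℕ} {M : Matrix (Fin k) (Fin k) ℝ} (h : IsUnit M) :
    IsUnit (M.map Complex.ofReal) := by
  have := h.invertible
  have h1 : M.map Complex.ofReal * (M⁻¹).map Complex.ofReal = 1 := by
    rw [← map_mul_ofReal, Matrix.mul_inv_of_invertible]
    ext i j
    simp [Matrix.one_apply, apply_ite Complex.ofReal]
  exact @isUnit_of_invertible _ _ _ (invertibleOfRightInverse _ _ h1)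

private lemma posDef_map_ofReal {k : ℕ} {M : Matrix (Fin k) (Fin k) ℝ} (hM : M.PosDef) :
    (M.map Complex.ofReal).PosDef := by
  classical
  open scoped MatrixOrder in
  set S := CFC.sqrt M with hSdef
  open scoped MatrixOrder in
  have hSS : S * S = M :=
    CFC.sqrt_mul_sqrt_self M (Matrix.nonneg_iff_posSemidef.mpr hM.posSemidef)
  open scoped MatrixOrder in
  have hSherm : Sᴴ = S := (CFC.sqrt_nonneg M).isSelfAdjoint
  have hSunit : IsUnit S := by
    rw [Matrix.isUnit_iff_isUnit_det, isUnit_iff_ne_zero]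
    intro h0
    have : M.det = 0 := by rw [← hSS, Matrix.det_mul, h0, mul_zero]
    exact hM.det_pos.ne' this
  set L : Matrix (Fin k) (Fin k) ℂ := S.map Complex.ofReal with hLdef
  have hLherm : Lᴴ = L := by
    rw [hLdef, ← Matrix.conjTranspose_map Complex.ofReal (fun a => by simp), hSherm]
  have hMeq : M.map Complex.ofReal = Lᴴ * L := by
    rw [hLherm, hLdef, ← map_mul_ofReal, hSS]
  have hLunit : IsUnit L := isUnit_map_of_isUnit hSunit
  apply Matrix.PosDef.of_dotProduct_mulVec_pos
  · rw [hMeq]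
    exact (Matrix.posSemidef_conjTranspose_mul_self L).1
  · intro x hx
    have hy : L *ᵥ x ≠ 0 := by
      intro h0
      exact hx (Matrix.mulVec_injective_iff_isUnit.mpr hLunit (by simpa using h0))
    have : star x ⬝ᵥ (M.map Complex.ofReal) *ᵥ x = star (L *ᵥ x) ⬝ᵥ (L *ᵥ x) := by
      rw [hMeq, ← Matrix.mulVec_mulVec, Matrix.dotProduct_mulVec, star_mulVec]
    rw [this]
    exact dotProduct_star_self_pos_iff.mpr hy

private lemma quad_rearrange {a b : ℕ} (L : Matrix (Fin a) (Fin b) ℂ)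
    (N : Matrix (Fin b) (Fin b) ℂ) (x : Fin a → ℂ) :
    star x ⬝ᵥ (L * N * Lᴴ) *ᵥ x = star (Lᴴ *ᵥ x) ⬝ᵥ N *ᵥ (Lᴴ *ᵥ x) := by
  rw [star_mulVec, conjTranspose_conjTranspose, ← Matrix.mulVec_mulVec,
    ← Matrix.mulVec_mulVec, Matrix.dotProduct_mulVec]

/-- Every eigenvalue of `Â = (αI + BBᵀ)⁻¹ B A⁻¹ Bᵀ` is real and positive,
where `A` is symmetric positive definite, `B` has full row rank and `α > 0`.
Eigenvalues are taken over `ℂ`. -/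
theorem Ahat_eigenvalues_real_positive (n m : ℕ)
    (A : Matrix (Fin n) (Fin n) ℝ) (B : Matrix (Fin m) (Fin n) ℝ)
    (hA : A.PosDef) (hB : B.rank = m) (α : ℝ) (hα : 0 < α)
    (Ahat : Matrix (Fin m) (Fin m) ℝ)
    (hAhat : Ahat = (α • (1 : Matrix (Fin m) (Fin m) ℝ) + B * Bᵀ)⁻¹ * B * A⁻¹ * Bᵀ)
    (μ : ℂ) (x : Fin m → ℂ) (hx : x ≠ 0)
    (heig : (Ahat.map (Complex.ofReal)).mulVec x = μ • x) :
    μ.im = 0 ∧ 0 < μ.re := by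
  classical
  set MM : Matrix (Fin m) (Fin m) ℝ := α • (1 : Matrix (Fin m) (Fin m) ℝ) + B * Bᵀ with hMMdef
  set CC : Matrix (Fin m) (Fin m) ℝ := B * A⁻¹ * Bᵀ with hCCdef
  -- MM is positive definite over ℝ
  have hBBT : (B * Bᵀ).PosSemidef := by
    have := Matrix.posSemidef_self_mul_conjTranspose B
    rwa [Matrix.conjTranspose_eq_transpose_of_trivial] at this
  have hMM : MM.PosDef := by
    have h1 : (α • (1 : Matrix (Fin m) (Fin m) ℝ)).PosDef := by
      rw [Matrix.smul_one_eq_diagonal]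
      exact Matrix.PosDef.diagonal fun _ => hα
    exact h1.add_posSemidef hBBT
  -- MM * Ahat = CC
  have hMMunit : IsUnit MM := hMM.isUnit
  have hMMA : MM * Ahat = CC := by
    have := hMMunit.invertible
    rw [hAhat]
    simp only [Matrix.mul_assoc, hCCdef]
    rw [Matrix.mul_inv_cancel_left_of_invertible]
  -- the key vector equation over ℂ
  have heq : (CC.map Complex.ofReal) *ᵥ x = μ • ((MM.map Complex.ofReal) *ᵥ x) := by
    calc (CC.map Complex.ofReal) *ᵥ x
        = ((MM * Ahat).map Complex.ofReal) *ᵥ x := by rw [hMMA]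
      _ = (MM.map Complex.ofReal * Ahat.map Complex.ofReal) *ᵥ x := by
          rw [map_mul_ofReal]
      _ = (MM.map Complex.ofReal) *ᵥ ((Ahat.map Complex.ofReal) *ᵥ x) := by
          rw [Matrix.mulVec_mulVec]
      _ = (MM.map Complex.ofReal) *ᵥ (μ • x) := by rw [heig]
      _ = μ • ((MM.map Complex.ofReal) *ᵥ x) := Matrix.mulVec_smul _ _ _
  -- quadratic forms
  set qM : ℂ := star x ⬝ᵥ (MM.map Complex.ofReal) *ᵥ x with hqM
  set qC : ℂ := star x ⬝ᵥ (CC.map Complex.ofReal) *ᵥ x with hqC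
  have hkey : qC = μ * qM := by
    rw [hqC, heq, dotProduct_smul, smul_eq_mul, hqM]
  -- qM is positive
  have hMMC : (MM.map Complex.ofReal).PosDef := posDef_map_ofReal hMM
  have hqMpos : 0 < qM := hMMC.dotProduct_mulVec_pos hx
  -- the vector y = Bᵀ x is nonzero
  set Lc : Matrix (Fin m) (Fin n) ℂ := B.map Complex.ofReal with hLc
  have hLcH : Lcᴴ = Bᵀ.map Complex.ofReal := by
    rw [hLc, ← Matrix.conjTranspose_map Complex.ofReal (fun a => by simp),
      Matrix.conjTranspose_eq_transpose_of_trivial]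
  have hy : Lcᴴ *ᵥ x ≠ 0 := by
    intro h0
    have hBBTrank : (B * Bᵀ).rank = m := by rw [Matrix.rank_self_mul_transpose, hB]
    have hBBTunit : IsUnit ((B * Bᵀ).map Complex.ofReal) :=
      isUnit_map_of_isUnit (isUnit_of_rank_eq _ hBBTrank)
    have hzero : ((B * Bᵀ).map Complex.ofReal) *ᵥ x = 0 := by
      have hmm : (B * Bᵀ).map Complex.ofReal = Lc * Lcᴴ := by
        rw [hLcH, hLc, ← map_mul_ofReal]
      rw [hmm, ← Matrix.mulVec_mulVec, h0, Matrix.mulVec_zero]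
    exact hx (Matrix.mulVec_injective_iff_isUnit.mpr hBBTunit (by simpa using hzero))
  -- qC is positive
  have hAinvC : ((A⁻¹).map Complex.ofReal).PosDef := posDef_map_ofReal hA.inv
  have hqCpos : 0 < qC := by
    have hCCmap : CC.map Complex.ofReal = Lc * ((A⁻¹).map Complex.ofReal) * Lcᴴ := by
      rw [hLcH, hLc, hCCdef, ← map_mul_ofReal, ← map_mul_ofReal]
    rw [hqC, hCCmap, quad_rearrange]
    exact hAinvC.dotProduct_mulVec_pos hy
  -- extract real/imaginary parts
  rw [Complex.lt_def] at hqMpos hqCpos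
  obtain ⟨hMre, hMim⟩ := hqMpos
  obtain ⟨hCre, hCim⟩ := hqCpos
  simp only [Complex.zero_re, Complex.zero_im] at hMre hMim hCre hCim
  have hre : qC.re = μ.re * qM.re := by
    rw [hkey, Complex.mul_re, ← hMim, mul_zero, sub_zero]
  have him : qC.im = μ.im * qM.re := by
    rw [hkey, Complex.mul_im, ← hMim, mul_zero, zero_add]
  constructor
  · have : μ.im * qM.re = 0 := by rw [← him, ← hCim]
    rcases mul_eq_zero.mp this with h | h
    · exact h
    · exact absurd h hMre.ne'
  · nlinarith [hCre, hre, hMre]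
end

section
/- If λ_min(A) > ½ κ(B)², where κ(B) = σ_max(B)/σ_min(B), then for every α > 0 the spectral radius of the REHSS iteration matrix Γ = I - P⁻¹𝒜 is strictly less than 1. -/
open Matrix

noncomputable section
def cmap {k l : Type*} (M : Matrix k l ℝ) : Matrix k l ℂ :=
  M.map Complex.ofReal

lemma cmap_mul {k l p : Type*} [Fintype l] (M : Matrix k l ℝ) (N : Matrix l p ℝ) :
    cmap (M * N) = cmap M * cmap N := by
  ext i j; simp [cmap, Matrix.mul_apply]

lemma cmap_conjTranspose {k l : Type*} (M : Matrix k l ℝ) :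
    (cmap M)ᴴ = cmap Mᵀ := by
  ext i j; simp [cmap, conjTranspose_apply, Complex.conj_ofReal]

lemma cmap_one {k : Type*} [DecidableEq k] : cmap (1 : Matrix k k ℝ) = 1 := by
  ext i j; simp [cmap, Matrix.one_apply, apply_ite]

lemma cmap_diagonal {k : ℕ} (d : Fin k → ℝ) :
    cmap (Matrix.diagonal d) = Matrix.diagonal (fun i => (d i : ℂ)) := by
  simp only [cmap, Matrix.diagonal_map (Complex.ofReal_zero)]

lemma quad_form (k : ℕ) (U : Matrix (Fin k) (Fin k) ℝ) (hU : Uᵀ * U = 1)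
    (d : Fin k → ℝ) (z : Fin k → ℂ) :
    ∃ w : Fin k → ℝ, (∀ i, 0 ≤ w i) ∧
      star z ⬝ᵥ (cmap (U * Matrix.diagonal d * Uᵀ)).mulVec z = ((∑ i, d i * w i : ℝ) : ℂ) ∧
      star z ⬝ᵥ z = ((∑ i, w i : ℝ) : ℂ) := by
  classical
  set Uc := cmap U with hUcdef
  have hUc1 : Ucᴴ * Uc = 1 := by
    rw [cmap_conjTranspose, ← cmap_mul, hU, cmap_one]
  have hUc2 : Uc * Ucᴴ = 1 := mul_eq_one_comm.mp hUc1
  set w' : Fin k → ℂ := Ucᴴ.mulVec z with hw'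
  have h2 : Matrix.vecMul (star z) Uc = star w' := by
    rw [hw', Matrix.star_mulVec, conjTranspose_conjTranspose]
  have hsum : ∀ u : Fin k → ℂ, star u ⬝ᵥ u = ((∑ i, Complex.normSq (u i) : ℝ) : ℂ) := by
    intro u
    simp only [dotProduct, Pi.star_apply, Complex.ofReal_sum]
    congr 1; funext i
    rw [Complex.normSq_eq_conj_mul_self]; rfl
  refine ⟨fun i => Complex.normSq (w' i), fun i => Complex.normSq_nonneg _, ?_, ?_⟩
  · have h1 : cmap (U * Matrix.diagonal d * Uᵀ)
        = Uc * Matrix.diagonal (fun i => (d i : ℂ)) * Ucᴴ := by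
      rw [cmap_mul, cmap_mul, cmap_diagonal, cmap_conjTranspose]
    rw [h1, ← Matrix.mulVec_mulVec, ← Matrix.mulVec_mulVec, Matrix.dotProduct_mulVec (star z), h2, ← hw']
    have h3 : ∀ i, (Matrix.diagonal (fun i => (d i : ℂ))).mulVec w' i = (d i : ℂ) * w' i := by
      intro i; rw [Matrix.mulVec_diagonal]
    simp only [dotProduct, h3, Complex.ofReal_sum, Pi.star_apply]
    congr 1; funext i
    rw [Complex.ofReal_mul, Complex.normSq_eq_conj_mul_self]
    simp only [Complex.star_def]; ring
  · have : star w' ⬝ᵥ w' = star z ⬝ᵥ z := by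
      rw [← h2, hw', Matrix.dotProduct_mulVec, Matrix.vecMul_vecMul, hUc2, Matrix.vecMul_one]
    rw [← this, hsum]

lemma real_spectral (k : ℕ) (M : Matrix (Fin k) (Fin k) ℝ) (hM : M.IsHermitian) :
    ∃ U : Matrix (Fin k) (Fin k) ℝ, Uᵀ * U = 1 ∧
      M = U * Matrix.diagonal hM.eigenvalues * Uᵀ := by
  classical
  refine ⟨(hM.eigenvectorUnitary : Matrix (Fin k) (Fin k) ℝ), ?_, ?_⟩
  · have h := ((Matrix.mem_unitaryGroup_iff').mp hM.eigenvectorUnitary.2)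
    have e : (starRingEnd ℝ : ℝ → ℝ) = id := funext fun x => by simp
    simpa [Matrix.star_eq_conjTranspose, Matrix.conjTranspose, e, Matrix.map_id] using h
  · have h := hM.spectral_theorem
    have hstar : (star (hM.eigenvectorUnitary : Matrix (Fin k) (Fin k) ℝ))
        = (hM.eigenvectorUnitary : Matrix (Fin k) (Fin k) ℝ)ᵀ := by
      ext i j; simp [Matrix.star_eq_conjTranspose, Matrix.conjTranspose_apply]
    rw [Unitary.conjStarAlgAut_apply, hstar] at h
    convert h using 3 <;> rfl

lemma inv_decomp (k : ℕ) (U : Matrix (Fin k) (Fin k) ℝ) (hU : Uᵀ * U = 1)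
    (d : Fin k → ℝ) (hd : ∀ i, d i ≠ 0) :
    (U * Matrix.diagonal d * Uᵀ)⁻¹ = U * Matrix.diagonal (fun i => (d i)⁻¹) * Uᵀ := by
  classical
  have hU2 : U * Uᵀ = 1 := mul_eq_one_comm.mp hU
  apply Matrix.inv_eq_right_inv
  have hdd : Matrix.diagonal d * Matrix.diagonal (fun i => (d i)⁻¹) = 1 := by
    rw [Matrix.diagonal_mul_diagonal]
    convert Matrix.diagonal_one
    exact mul_inv_cancel₀ (hd _)
  calc U * Matrix.diagonal d * Uᵀ * (U * Matrix.diagonal (fun i => (d i)⁻¹) * Uᵀ)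
      = U * Matrix.diagonal d * (Uᵀ * U) * Matrix.diagonal (fun i => (d i)⁻¹) * Uᵀ := by
        simp only [Matrix.mul_assoc]
    _ = 1 := by rw [hU, Matrix.mul_one, Matrix.mul_assoc U, hdd, Matrix.mul_one, hU2]

lemma cmap_transpose {k l : Type*} (M : Matrix k l ℝ) : cmap Mᵀ = (cmap M)ᵀ := by
  ext i j; simp [cmap]

lemma cmap_neg {k l : Type*} (M : Matrix k l ℝ) : cmap (-M) = -(cmap M) := by
  ext i j; simp [cmap]

lemma cmap_sub {k l : Type*} (M N : Matrix k l ℝ) : cmap (M - N) = cmap M - cmap N := by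
  ext i j; simp [cmap]

lemma cmap_smul_one {k : Type*} [DecidableEq k] (c : ℝ) :
    cmap (c • (1 : Matrix k k ℝ)) = (c : ℂ) • (1 : Matrix k k ℂ) := by
  ext i j
  by_cases h : i = j <;> simp [cmap, Matrix.one_apply, h]

lemma cmap_zero {k l : Type*} : cmap (0 : Matrix k l ℝ) = 0 := by
  ext i j; simp [cmap]

lemma cmap_inv {k : Type*} [Fintype k] [DecidableEq k] (M : Matrix k k ℝ) (hM : IsUnit M.det) :
    (cmap M)⁻¹ = cmap M⁻¹ := by
  apply Matrix.inv_eq_right_inv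
  rw [← cmap_mul, Matrix.mul_nonsing_inv _ hM, cmap_one]

lemma dot_star_self {k : ℕ} (u : Fin k → ℂ) :
    star u ⬝ᵥ u = ((∑ i, Complex.normSq (u i) : ℝ) : ℂ) := by
  simp only [dotProduct, Pi.star_apply, Complex.ofReal_sum]
  congr 1; funext i
  rw [Complex.normSq_eq_conj_mul_self]; rfl

lemma fin_ciInf_le {k : ℕ} [Nonempty (Fin k)] (f : Fin k → ℝ) (i : Fin k) : (⨅ j, f j) ≤ f i :=
  ciInf_le (Set.Finite.bddBelow (Set.finite_range f)) i

lemma fin_le_ciSup {k : ℕ} [Nonempty (Fin k)] (f : Fin k → ℝ) (i : Fin k) : f i ≤ (⨆ j, f j) :=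
  le_ciSup (Set.Finite.bddAbove (Set.finite_range f)) i

lemma fin_pos_ciInf {k : ℕ} [Nonempty (Fin k)] (f : Fin k → ℝ) (hf : ∀ i, 0 < f i) :
    0 < ⨅ j, f j := by
  obtain ⟨i, hi⟩ := Finite.exists_min f
  have : (⨅ j, f j) = f i := le_antisymm (fin_ciInf_le f i) (le_ciInf hi)
  rw [this]; exact hf i

set_option maxHeartbeats 1000000 in
/-- If `λ_min(A) > ½ κ(B)²` with `κ(B) = σ_max(B)/σ_min(B)`, then for every
`α > 0` the spectral radius of the REHSS iteration matrix `Γ = I - P⁻¹𝒜` is `< 1`. The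
singular values of `B` are the square roots of the eigenvalues of `BBᵀ`. -/
theorem REHSS_unconditional_convergence (n m : ℕ)
    (A : Matrix (Fin n) (Fin n) ℝ) (B : Matrix (Fin m) (Fin n) ℝ)
    (hA : A.PosDef) (hB : B.rank = m) (hmn : m < n)
    (hBBT : (B * Bᵀ).IsHermitian)
    (σmax σmin : ℝ)
    (hσmax : σmax = Real.sqrt (⨆ i, hBBT.eigenvalues i))
    (hσmin : σmin = Real.sqrt (⨅ i, hBBT.eigenvalues i))
    (hcond : (⨅ i, hA.1.eigenvalues i) > (2 : ℝ)⁻¹ * (σmax / σmin) ^ 2)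
    (α : ℝ) (hα : 0 < α)
    (P 𝒜 Γ : Matrix (Fin n ⊕ Fin m) (Fin n ⊕ Fin m) ℝ)
    (hP : P = Matrix.fromBlocks A (A * Bᵀ) (-B) (α • (1 : Matrix (Fin m) (Fin m) ℝ)))
    (h𝒜 : 𝒜 = Matrix.fromBlocks A Bᵀ (-B) (0 : Matrix (Fin m) (Fin m) ℝ))
    (hΓ : Γ = 1 - P⁻¹ * 𝒜) :
    ∀ (μ : ℂ) (v : Fin n ⊕ Fin m → ℂ), v ≠ 0 →
      (Γ.map (Complex.ofReal)).mulVec v = μ • v → ‖μ‖ < 1 := by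
  classical
  intro μ v hv hμv
  haveI : Nonempty (Fin n) := ⟨⟨0, lt_of_le_of_lt (Nat.zero_le m) hmn⟩⟩
  have hAdet : IsUnit A.det := hA.det_pos.ne'.isUnit
  -- P is invertible
  have hPdet : IsUnit P.det := by
    haveI : Invertible A := A.invertibleOfIsUnitDet hAdet
    have h1 : A⁻¹ * (A * Bᵀ) = Bᵀ := by
      rw [← Matrix.mul_assoc, Matrix.nonsing_inv_mul _ hAdet, Matrix.one_mul]
    have hSchur : α • (1 : Matrix (Fin m) (Fin m) ℝ) - (-B) * ⅟A * (A * Bᵀ) = α • 1 + B * Bᵀ := by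
      rw [invOf_eq_nonsing_inv, Matrix.mul_assoc, h1, Matrix.neg_mul, sub_neg_eq_add]
    have hBBs : (B * Bᵀ).PosSemidef := by
      have h := Matrix.posSemidef_self_mul_conjTranspose B
      simpa using h
    have hsmul : (α • (1 : Matrix (Fin m) (Fin m) ℝ)) = Matrix.diagonal (fun _ => α) := by
      ext i j; by_cases h : i = j <;> simp [Matrix.one_apply, h]
    have hSPD : (α • (1 : Matrix (Fin m) (Fin m) ℝ) + B * Bᵀ).PosDef := by
      rw [hsmul]
      exact Matrix.PosDef.add_posSemidef (Matrix.posDef_diagonal_iff.mpr fun _ => hα) hBBs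
    have : P.det = A.det * (α • (1 : Matrix (Fin m) (Fin m) ℝ) + B * Bᵀ).det := by
      rw [hP, Matrix.det_fromBlocks₁₁, hSchur]
    rw [this]
    exact ((mul_pos hA.det_pos hSPD.det_pos).ne').isUnit
  have hPG : P * Γ = P - 𝒜 := by
    rw [hΓ, Matrix.mul_sub, Matrix.mul_one, ← Matrix.mul_assoc,
      Matrix.mul_nonsing_inv _ hPdet, Matrix.one_mul]
  -- complexified main equation
  have hmain : μ • (cmap P).mulVec v = (cmap P).mulVec v - (cmap 𝒜).mulVec v := by
    have h2 : (cmap Γ).mulVec v = μ • v := hμv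
    calc μ • (cmap P).mulVec v = (cmap P).mulVec (μ • v) := (Matrix.mulVec_smul _ _ _).symm
      _ = (cmap P).mulVec ((cmap Γ).mulVec v) := by rw [h2]
      _ = (cmap P * cmap Γ).mulVec v := Matrix.mulVec_mulVec _ _ _
      _ = (cmap (P - 𝒜)).mulVec v := by rw [← cmap_mul, hPG]
      _ = _ := by rw [cmap_sub, Matrix.sub_mulVec]
  set x : Fin n → ℂ := fun i => v (Sum.inl i) with hx
  set y : Fin m → ℂ := fun j => v (Sum.inr j) with hy
  have hveq : v = Sum.elim x y := by funext i; cases i <;> rfl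
  have hPc : cmap P = Matrix.fromBlocks (cmap A) (cmap (A * Bᵀ)) (-(cmap B)) ((α : ℂ) • 1) := by
    rw [hP]
    have : cmap (Matrix.fromBlocks A (A * Bᵀ) (-B) (α • (1 : Matrix (Fin m) (Fin m) ℝ)))
        = Matrix.fromBlocks (cmap A) (cmap (A * Bᵀ)) (cmap (-B)) (cmap (α • 1)) := by
      simp only [cmap]; exact Matrix.fromBlocks_map _ _ _ _ _
    rw [this, cmap_neg, cmap_smul_one]
  have h𝒜c : cmap 𝒜 = Matrix.fromBlocks (cmap A) (cmap Bᵀ) (-(cmap B)) 0 := by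
    rw [h𝒜]
    have : cmap (Matrix.fromBlocks A Bᵀ (-B) (0 : Matrix (Fin m) (Fin m) ℝ))
        = Matrix.fromBlocks (cmap A) (cmap Bᵀ) (cmap (-B)) (cmap 0) := by
      simp only [cmap]; exact Matrix.fromBlocks_map _ _ _ _ _
    rw [this, cmap_neg, cmap_zero]
  rw [hPc, h𝒜c, hveq, Matrix.fromBlocks_mulVec, Matrix.fromBlocks_mulVec] at hmain
  -- row equations
  have e1 : ∀ i, μ * ((cmap A).mulVec x i + (cmap (A * Bᵀ)).mulVec y i)
      = (cmap (A * Bᵀ)).mulVec y i - (cmap Bᵀ).mulVec y i := by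
    intro i
    have h := congrFun hmain (Sum.inl i)
    simp only [Sum.elim_comp_inl, Sum.elim_comp_inr, Sum.elim_inl, Pi.smul_apply, Pi.sub_apply, Pi.add_apply, smul_eq_mul] at h
    linear_combination h
  have e2 : ∀ j, μ * (-((cmap B).mulVec x j) + (α : ℂ) * y j) = (α : ℂ) * y j := by
    intro j
    have h := congrFun hmain (Sum.inr j)
    simp only [Sum.elim_comp_inl, Sum.elim_comp_inr, Sum.elim_inr, Pi.smul_apply, Pi.sub_apply, Pi.add_apply, smul_eq_mul,
      Matrix.neg_mulVec, Pi.neg_apply, Matrix.smul_mulVec, Matrix.one_mulVec,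
      Matrix.zero_mulVec, Pi.zero_apply, add_zero, Complex.real_smul] at h
    linear_combination h
  -- vector form of row 1, multiplied by A⁻¹
  have hAcdet : IsUnit (cmap A).det := by
    have h : (cmap A).det = Complex.ofReal A.det := (RingHom.map_det Complex.ofRealHom A).symm
    rw [h]
    exact (Complex.ofReal_ne_zero.mpr hA.det_pos.ne').isUnit
  have hinv1 : (cmap A)⁻¹ * cmap A = 1 := Matrix.nonsing_inv_mul _ hAcdet
  have e1' : μ • (x + (cmap Bᵀ).mulVec y)
      = (cmap Bᵀ).mulVec y - ((cmap A)⁻¹ * cmap Bᵀ).mulVec y := by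
    have e1v : μ • ((cmap A).mulVec x + (cmap (A * Bᵀ)).mulVec y)
        = (cmap (A * Bᵀ)).mulVec y - (cmap Bᵀ).mulVec y := by
      funext i
      simp only [Pi.smul_apply, Pi.sub_apply, Pi.add_apply, smul_eq_mul]
      exact e1 i
    have h := congrArg (fun u => (cmap A)⁻¹.mulVec u) e1v
    simp only [Matrix.mulVec_smul, Matrix.mulVec_add, Matrix.mulVec_sub,
      Matrix.mulVec_mulVec] at h
    have hinv2 : (cmap A)⁻¹ * cmap (A * Bᵀ) = cmap Bᵀ := by
      rw [cmap_mul, ← Matrix.mul_assoc, hinv1, Matrix.one_mul]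
    rw [hinv1, hinv2, Matrix.one_mulVec] at h
    exact h
  -- case y = 0
  by_cases hy0 : y = 0
  · have hx0 : x ≠ 0 := by
      intro hx0
      apply hv
      rw [hveq, hx0, hy0]
      funext i; cases i <;> rfl
    rw [hy0] at e1'
    simp only [Matrix.mulVec_zero, add_zero, sub_zero, smul_zero] at e1'
    rcases smul_eq_zero.mp e1' with h | h
    · simp [h]
    · exact absurd h hx0
  -- case y ≠ 0
  haveI : Nonempty (Fin m) := by
    rcases Function.ne_iff.mp hy0 with ⟨j, -⟩
    exact ⟨j⟩
  set G : Fin m → ℂ := (cmap B * cmap Bᵀ).mulVec y with hG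
  set H : Fin m → ℂ := (cmap B * ((cmap A)⁻¹ * cmap Bᵀ)).mulVec y with hH
  have key : ∀ j, (1 - μ) * (G j + (α : ℂ) * y j) = H j := by
    intro j
    have h := congrArg (fun u => (cmap B).mulVec u) e1'
    simp only [Matrix.mulVec_smul, Matrix.mulVec_add, Matrix.mulVec_sub,
      Matrix.mulVec_mulVec] at h
    have h1 := congrFun h j
    simp only [Pi.smul_apply, Pi.sub_apply, Pi.add_apply, smul_eq_mul] at h1
    have h2 := e2 j
    simp only [hG, hH]
    linear_combination -h1 - h2
  have keyv : (1 - μ) • (G + (α : ℂ) • y) = H := by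
    funext j
    simp only [Pi.smul_apply, Pi.add_apply, smul_eq_mul]
    exact key j
  -- dot with star y
  have hdot : (1 - μ) * (star y ⬝ᵥ G + (α : ℂ) * (star y ⬝ᵥ y)) = star y ⬝ᵥ H := by
    have h := congrArg (fun u => star y ⬝ᵥ u) keyv
    simpa only [dotProduct_smul, dotProduct_add, smul_eq_mul, mul_add] using h
  -- quadratic forms
  set z : Fin n → ℂ := (cmap Bᵀ).mulVec y with hzdef
  have hzB : star y ᵥ* cmap B = star z := by
    rw [hzdef, Matrix.star_mulVec, cmap_conjTranspose, Matrix.transpose_transpose]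
  have hdotG : star y ⬝ᵥ G = star z ⬝ᵥ z := by
    rw [hG, ← Matrix.mulVec_mulVec, Matrix.dotProduct_mulVec, hzB, hzdef]
  have hdotH : star y ⬝ᵥ H = star z ⬝ᵥ ((cmap A)⁻¹.mulVec z) := by
    rw [hH, ← Matrix.mulVec_mulVec, Matrix.dotProduct_mulVec, hzB, ← Matrix.mulVec_mulVec, hzdef]
  obtain ⟨V, hV, hdecB⟩ := real_spectral m (B * Bᵀ) hBBT
  obtain ⟨w1, hw1, hq1, hs1⟩ := quad_form m V hV hBBT.eigenvalues y
  rw [← hdecB, cmap_mul] at hq1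
  rw [← hG] at hq1
  obtain ⟨Ua, hUa, hdecA⟩ := real_spectral n A hA.1
  have hAinvdec : A⁻¹ = Ua * Matrix.diagonal (fun i => (hA.1.eigenvalues i)⁻¹) * Uaᵀ := by
    conv_lhs => rw [hdecA]
    exact inv_decomp n Ua hUa _ (fun i => (hA.eigenvalues_pos i).ne')
  obtain ⟨w2, hw2, hq2, hs2⟩ := quad_form n Ua hUa (fun i => (hA.1.eigenvalues i)⁻¹) z
  rw [← hAinvdec, ← cmap_inv A hAdet] at hq2
  -- real quantities
  set eigA : Fin n → ℝ := hA.1.eigenvalues with heigA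
  set eigB : Fin m → ℝ := hBBT.eigenvalues with heigB
  set a : ℝ := ⨅ i, eigA i with ha_def
  set lm : ℝ := ⨅ i, eigB i with hlm_def
  set lM : ℝ := ⨆ i, eigB i with hlM_def
  set r1 : ℝ := ∑ i, eigB i * w1 i with hr1_def
  set s : ℝ := ∑ i, w1 i with hs_def
  set r2 : ℝ := ∑ i, (eigA i)⁻¹ * w2 i with hr2_def
  set s2 : ℝ := ∑ i, w2 i with hs2_def
  have ha_pos : 0 < a := lt_of_le_of_lt (by positivity) hcond
  have ha_le : ∀ i, a ≤ eigA i := fun i => fin_ciInf_le eigA i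
  have heigA_pos : ∀ i, 0 < eigA i := fun i => hA.eigenvalues_pos i
  set aM : ℝ := ⨆ i, eigA i with haM_def
  have haM_le : ∀ i, eigA i ≤ aM := fun i => fin_le_ciSup eigA i
  have haM_pos : 0 < aM :=
    lt_of_lt_of_le (heigA_pos (Classical.arbitrary _)) (haM_le (Classical.arbitrary _))
  -- eigenvalues of B*Bᵀ are positive
  have hBBs : (B * Bᵀ).PosSemidef := by
    have h := Matrix.posSemidef_self_mul_conjTranspose B
    simpa using h
  have hBBdet : IsUnit (B * Bᵀ).det := by
    have hr : (B * Bᵀ).rank = Fintype.card (Fin m) := by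
      rw [Matrix.rank_self_mul_transpose, hB, Fintype.card_fin]
    have hsurj : Function.Surjective (B * Bᵀ).mulVecLin := by
      rw [← LinearMap.range_eq_top]
      apply Submodule.eq_top_of_finrank_eq
      rw [← Matrix.rank, hr, Fintype.card_fin]
      simp [Module.finrank_pi]
    have hU : IsUnit (B * Bᵀ) := Matrix.mulVec_surjective_iff_isUnit.mp hsurj
    exact (Matrix.isUnit_iff_isUnit_det _).mp hU
  have heigB_pos : ∀ i, 0 < eigB i := by
    intro i
    rcases (hBBs.eigenvalues_nonneg i).lt_or_eq with h | h
    · exact h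
    · exfalso
      have hdet := hBBT.det_eq_prod_eigenvalues
      have : (B * Bᵀ).det = 0 := by
        rw [hdet]
        exact Finset.prod_eq_zero (Finset.mem_univ i) (by rw [← h]; simp)
      exact hBBdet.ne_zero (by exact_mod_cast this)
  have hlm_pos : 0 < lm := fin_pos_ciInf eigB heigB_pos
  have hlm_le : ∀ i, lm ≤ eigB i := fun i => fin_ciInf_le eigB i
  have hlM_ge : ∀ i, eigB i ≤ lM := fun i => fin_le_ciSup eigB i
  -- s > 0
  have hs_pos : 0 < s := by
    rcases Function.ne_iff.mp hy0 with ⟨j, hj⟩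
    have h1 : ((s : ℝ) : ℂ) = ((∑ i, Complex.normSq (y i) : ℝ) : ℂ) := by
      rw [← hs1, dot_star_self]
    have h2 : s = ∑ i, Complex.normSq (y i) := Complex.ofReal_inj.mp h1
    rw [h2]
    exact Finset.sum_pos' (fun i _ => Complex.normSq_nonneg _)
      ⟨j, Finset.mem_univ j, Complex.normSq_pos.mpr hj⟩
  have hs2r1 : s2 = r1 := by
    have h1 : ((s2 : ℝ) : ℂ) = ((r1 : ℝ) : ℂ) := by rw [← hs2, ← hq1, hdotG]
    exact Complex.ofReal_inj.mp h1
  -- bounds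
  have hr1_ge : lm * s ≤ r1 := by
    rw [hr1_def, hs_def, Finset.mul_sum]
    exact Finset.sum_le_sum fun i _ => mul_le_mul_of_nonneg_right (hlm_le i) (hw1 i)
  have hr1_le : r1 ≤ lM * s := by
    rw [hr1_def, hs_def, Finset.mul_sum]
    exact Finset.sum_le_sum fun i _ => mul_le_mul_of_nonneg_right (hlM_ge i) (hw1 i)
  have hr2_le : r2 ≤ a⁻¹ * s2 := by
    rw [hr2_def, hs2_def, Finset.mul_sum]
    refine Finset.sum_le_sum fun i _ => mul_le_mul_of_nonneg_right ?_ (hw2 i)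
    exact inv_anti₀ ha_pos (ha_le i)
  have hr2_ge : aM⁻¹ * s2 ≤ r2 := by
    rw [hr2_def, hs2_def, Finset.mul_sum]
    refine Finset.sum_le_sum fun i _ => mul_le_mul_of_nonneg_right ?_ (hw2 i)
    exact inv_anti₀ (heigA_pos i) (haM_le i)
  have hr1_pos : 0 < r1 := lt_of_lt_of_le (mul_pos hlm_pos hs_pos) hr1_ge
  have hr2_pos : 0 < r2 := by
    have := hr2_ge
    rw [hs2r1] at this
    exact lt_of_lt_of_le (mul_pos (inv_pos.mpr haM_pos) hr1_pos) this
  -- the complex equation becomes real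
  have hC : (1 - μ) * (((r1 + α * s : ℝ)) : ℂ) = ((r2 : ℝ) : ℂ) := by
    rw [hq1, hs1, hdotH, hq2] at hdot
    push_cast
    push_cast at hdot
    linear_combination hdot
  set D : ℝ := r1 + α * s with hD_def
  have hD_pos : 0 < D := by positivity
  have hμval : μ = ((1 - r2 / D : ℝ) : ℂ) := by
    have hDne : ((D : ℝ) : ℂ) ≠ 0 := Complex.ofReal_ne_zero.mpr hD_pos.ne'
    have h1 : 1 - μ = ((r2 / D : ℝ) : ℂ) := by
      rw [eq_comm, Complex.ofReal_div, div_eq_iff hDne, ← hC]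
    push_cast
    push_cast at h1
    linear_combination -h1
  -- σ identities and the final inequality
  have hσmin2 : σmin ^ 2 = lm := by rw [hσmin]; exact Real.sq_sqrt hlm_pos.le
  have hσmax2 : σmax ^ 2 = lM := by
    rw [hσmax]
    refine Real.sq_sqrt ?_
    exact le_trans hlm_pos.le (le_trans (hlm_le (Classical.arbitrary _))
      (hlM_ge (Classical.arbitrary _)))
  have hlM_lt : lM < 2 * lm * a := by
    have h := hcond
    rw [div_pow, hσmax2, hσmin2] at h
    have h2 : 2⁻¹ * (lM / lm) * (2 * lm) < a * (2 * lm) :=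
      mul_lt_mul_of_pos_right h (by positivity)
    have h3 : 2⁻¹ * (lM / lm) * (2 * lm) = lM := by field_simp
    nlinarith
  have hfinal : r2 < 2 * D := by
    have h1 : r2 ≤ a⁻¹ * r1 := by rwa [hs2r1] at hr2_le
    have h2 : a⁻¹ * r1 ≤ a⁻¹ * (lM * s) :=
      mul_le_mul_of_nonneg_left hr1_le (inv_nonneg.mpr ha_pos.le)
    have h3 : a⁻¹ * (lM * s) < a⁻¹ * ((2 * lm * a) * s) := by
      apply mul_lt_mul_of_pos_left _ (inv_pos.mpr ha_pos)
      exact mul_lt_mul_of_pos_right hlM_lt hs_pos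
    have h4 : a⁻¹ * ((2 * lm * a) * s) = 2 * (lm * s) := by field_simp
    have h5 : lm * s ≤ r1 := hr1_ge
    have h6 : 0 < α * s := mul_pos hα hs_pos
    rw [hD_def]
    nlinarith
  rw [hμval, Complex.norm_real, Real.norm_eq_abs, abs_lt]
  constructor
  · have : r2 / D < 2 := by rw [div_lt_iff₀ hD_pos]; linarith
    linarith
  · have : 0 < r2 / D := div_pos hr2_pos hD_pos
    linarith
end
end

section
/- The preconditioned matrix P⁻¹𝒜 (with P = [[A, ABᵀ],[-B, αI]], 𝒜 = [[A, Bᵀ],[-B, 0]], α > 0) has eigenvalue 1 with algebraic multiplicity at least n, and its remaining eigenvalues are exactly the eigenvalues of the m×m matrix Â = (αI + BBᵀ)⁻¹BA⁻¹Bᵀ. -/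
open Matrix Polynomial

lemma charpoly_one_aux (k : ℕ) :
    (1 : Matrix (Fin k) (Fin k) ℝ).charpoly = (X - C 1) ^ k := by
  have : charmatrix (1 : Matrix (Fin k) (Fin k) ℝ)
      = diagonal (fun _ => (X - C 1 : ℝ[X])) := by
    ext i j
    by_cases h : i = j <;>
      simp [charmatrix, diagonal, h, Matrix.one_apply]
  rw [Matrix.charpoly, this, det_diagonal]
  simp

lemma smul_one_posDef {k : ℕ} {α : ℝ} (hα : 0 < α) :
    (α • (1 : Matrix (Fin k) (Fin k) ℝ)).PosDef := by
  have : (α • (1 : Matrix (Fin k) (Fin k) ℝ)) = diagonal (fun _ => α) := by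
    ext i j
    by_cases h : i = j <;> simp [diagonal, h, Matrix.one_apply]
  rw [this]
  exact Matrix.posDef_diagonal_iff.mpr fun _ => hα

/-- The preconditioned matrix `P⁻¹𝒜` has eigenvalue `1` of algebraic
multiplicity at least `n`, and its remaining eigenvalues are exactly the eigenvalues of
the `m × m` matrix `Â = (αI + BBᵀ)⁻¹BA⁻¹Bᵀ`: its characteristic polynomial factors as
`(X - 1)^n · charpoly(Â)`. -/
theorem REHSS_preconditioned_charpoly (n m : ℕ)
    (A : Matrix (Fin n) (Fin n) ℝ) (B : Matrix (Fin m) (Fin n) ℝ)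
    (hA : A.PosDef) (hB : B.rank = m) (hmn : m < n) (α : ℝ) (hα : 0 < α)
    (P 𝒜 : Matrix (Fin n ⊕ Fin m) (Fin n ⊕ Fin m) ℝ)
    (hP : P = Matrix.fromBlocks A (A * Bᵀ) (-B) (α • (1 : Matrix (Fin m) (Fin m) ℝ)))
    (h𝒜 : 𝒜 = Matrix.fromBlocks A Bᵀ (-B) (0 : Matrix (Fin m) (Fin m) ℝ))
    (Ahat : Matrix (Fin m) (Fin m) ℝ)
    (hAhat : Ahat = (α • (1 : Matrix (Fin m) (Fin m) ℝ) + B * Bᵀ)⁻¹ * B * A⁻¹ * Bᵀ) :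
    (P⁻¹ * 𝒜).charpoly = (X - C 1) ^ n * Ahat.charpoly := by
  set S : Matrix (Fin m) (Fin m) ℝ := α • (1 : Matrix (Fin m) (Fin m) ℝ) + B * Bᵀ with hS
  -- S is positive definite, hence invertible
  have hBBt : (B * Bᵀ).PosSemidef := by
    have := Matrix.posSemidef_self_mul_conjTranspose B
    simpa using this
  have hSpd : S.PosDef := (smul_one_posDef hα).add_posSemidef hBBt
  have hSdet : IsUnit S.det := isUnit_iff_ne_zero.mpr (ne_of_gt hSpd.det_pos)
  have hAdet : IsUnit A.det := isUnit_iff_ne_zero.mpr (ne_of_gt hA.det_pos)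
  have hAAinv : A * A⁻¹ = 1 := Matrix.mul_nonsing_inv A hAdet
  have hAinvA : A⁻¹ * A = 1 := Matrix.nonsing_inv_mul A hAdet
  have hSSinv : S * S⁻¹ = 1 := Matrix.mul_nonsing_inv S hSdet
  -- P is invertible
  have := hAdet.invertible
  haveI : Invertible A := Matrix.invertibleOfIsUnitDet A hAdet
  have hPdet : IsUnit P.det := by
    rw [hP, Matrix.det_fromBlocks₁₁]
    have h1 : α • (1 : Matrix (Fin m) (Fin m) ℝ) - (-B) * ⅟A * (A * Bᵀ) = S := by
      rw [Matrix.invOf_eq_nonsing_inv]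
      rw [hS]
      have : (-B) * A⁻¹ * (A * Bᵀ) = -(B * Bᵀ) := by
        rw [Matrix.neg_mul, Matrix.neg_mul]
        congr 1
        rw [Matrix.mul_assoc, ← Matrix.mul_assoc A⁻¹, hAinvA, Matrix.one_mul]
      rw [this, sub_neg_eq_add]
    rw [h1]
    exact hAdet.mul hSdet
  -- key identity: S * Ahat = B * A⁻¹ * Bᵀ
  have hSAhat : S * Ahat = B * A⁻¹ * Bᵀ := by
    rw [hAhat]
    simp only [← Matrix.mul_assoc]
    rw [hSSinv, Matrix.one_mul]
  -- the block triangular form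
  set T : Matrix (Fin n) (Fin m) ℝ := A⁻¹ * Bᵀ - Bᵀ * Ahat with hT
  have e11 : A * 1 + A * Bᵀ * (0 : Matrix (Fin m) (Fin n) ℝ) = A := by simp
  have e12 : A * T + A * Bᵀ * Ahat = Bᵀ := by
    rw [hT, Matrix.mul_sub]
    simp only [← Matrix.mul_assoc]
    rw [hAAinv, Matrix.one_mul]
    abel
  have e21 : (-B) * (1 : Matrix (Fin n) (Fin n) ℝ) + (α • (1 : Matrix (Fin m) (Fin m) ℝ)) * (0 : Matrix (Fin m) (Fin n) ℝ) = -B := by simp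
  have e22 : (-B) * T + (α • (1 : Matrix (Fin m) (Fin m) ℝ)) * Ahat = 0 := by
    rw [hT, Matrix.neg_mul, Matrix.mul_sub, smul_mul_assoc, Matrix.one_mul]
    have hα' : α • Ahat = S * Ahat - B * Bᵀ * Ahat := by
      rw [hS, Matrix.add_mul, smul_mul_assoc, Matrix.one_mul, add_sub_cancel_right]
    rw [hα', hSAhat]
    simp only [← Matrix.mul_assoc]
    abel
  have hPM : P * Matrix.fromBlocks 1 T 0 Ahat = 𝒜 := by
    rw [hP, h𝒜, Matrix.fromBlocks_multiply, e11, e12, e21, e22]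
  have hPinv : P⁻¹ * 𝒜 = Matrix.fromBlocks 1 T 0 Ahat := by
    rw [← hPM, ← Matrix.mul_assoc, Matrix.nonsing_inv_mul P hPdet, Matrix.one_mul]
  rw [hPinv, Matrix.charpoly_fromBlocks_zero₂₁, charpoly_one_aux]
end

section
/- Let (μ, [x; y]) be an eigenpair of P⁻¹𝒜 with P = [[A, ABᵀ],[-B, αI]] and 𝒜 = [[A, Bᵀ],[-B, 0]]. Then x ≠ 0, and the equations (μ-1)Ax + (μA - I)Bᵀy = 0 and μαy = (μ-1)Bx hold. -/
open Matrix

lemma transpose_mulVec_eq_zero {n m : ℕ} (B : Matrix (Fin m) (Fin n) ℝ)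
    (hB : B.rank = m) (v : Fin m → ℝ) (hv : Bᵀ *ᵥ v = 0) : v = 0 := by
  have hrank : (Bᵀ).rank = m := by rw [Matrix.rank_transpose]; exact hB
  have hker : LinearMap.ker (Bᵀ).mulVecLin = ⊥ := by
    have h1 := LinearMap.finrank_range_add_finrank_ker (Bᵀ).mulVecLin
    rw [Module.finrank_pi] at h1
    have h2 : Module.finrank ℝ (LinearMap.range (Bᵀ).mulVecLin) = m := hrank
    rw [h2] at h1
    simp at h1
    rw [← Submodule.finrank_eq_zero (R := ℝ)]
    simpa using h1
  have : v ∈ LinearMap.ker (Bᵀ).mulVecLin := hv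
  rw [hker] at this; exact this

lemma transpose_mulVec_complex_eq_zero {n m : ℕ} (B : Matrix (Fin m) (Fin n) ℝ)
    (hB : B.rank = m) (v : Fin m → ℂ) (hv : (Bᵀ.map Complex.ofReal) *ᵥ v = 0) : v = 0 := by
  have hre : Bᵀ *ᵥ (fun j => (v j).re) = 0 := by
    funext i
    have := congrFun hv i
    simp only [mulVec, dotProduct, Pi.zero_apply, map_apply] at this ⊢
    have := congrArg Complex.re this
    simpa [Complex.ofReal_mul] using this
  have him : Bᵀ *ᵥ (fun j => (v j).im) = 0 := by
    funext i
    have := congrFun hv i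
    simp only [mulVec, dotProduct, Pi.zero_apply, map_apply] at this ⊢
    have := congrArg Complex.im this
    simpa using this
  have h1 := transpose_mulVec_eq_zero B hB _ hre
  have h2 := transpose_mulVec_eq_zero B hB _ him
  funext j
  have e1 := congrFun h1 j
  have e2 := congrFun h2 j
  simp only [Pi.zero_apply] at e1 e2 ⊢
  exact Complex.ext e1 e2

/-- Let `(μ, [x; y])` be an eigenpair of `P⁻¹𝒜` (equivalently
`𝒜[x;y] = μ P[x;y]` with `[x;y] ≠ 0`). Then `x ≠ 0` and the equations
`(μ-1)Ax + (μA - I)Bᵀy = 0` and `μαy = (μ-1)Bx` hold. -/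
theorem REHSS_eigenpair_equations (n m : ℕ)
    (A : Matrix (Fin n) (Fin n) ℝ) (B : Matrix (Fin m) (Fin n) ℝ)
    (hA : A.PosDef) (hB : B.rank = m) (α : ℝ) (hα : 0 < α)
    (P 𝒜 : Matrix (Fin n ⊕ Fin m) (Fin n ⊕ Fin m) ℝ)
    (hP : P = Matrix.fromBlocks A (A * Bᵀ) (-B) (α • (1 : Matrix (Fin m) (Fin m) ℝ)))
    (h𝒜 : 𝒜 = Matrix.fromBlocks A Bᵀ (-B) (0 : Matrix (Fin m) (Fin m) ℝ))
    (μ : ℂ) (x : Fin n → ℂ) (y : Fin m → ℂ)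
    (hxy : Sum.elim x y ≠ 0)
    (heig : (𝒜.map (Complex.ofReal)).mulVec (Sum.elim x y) =
      μ • (P.map (Complex.ofReal)).mulVec (Sum.elim x y)) :
    x ≠ 0 ∧
    (μ - 1) • (A.map (Complex.ofReal)).mulVec x +
      ((μ • A.map (Complex.ofReal) - 1) * Bᵀ.map (Complex.ofReal)).mulVec y = 0 ∧
    (μ * (α : ℂ)) • y = (μ - 1) • (B.map (Complex.ofReal)).mulVec x := by
  subst hP h𝒜
  set A' := A.map (Complex.ofReal) with hA'
  set B' := B.map (Complex.ofReal) with hB'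
  set Bt' := Bᵀ.map (Complex.ofReal) with hBt'
  have h21 : (-B).map Complex.ofReal = -B' := by
    ext i j; simp [B']
  have h0 : (0 : Matrix (Fin m) (Fin m) ℝ).map Complex.ofReal = 0 := by
    ext i j; simp
  have hmapA : (Matrix.fromBlocks A Bᵀ (-B) (0 : Matrix (Fin m) (Fin m) ℝ)).map Complex.ofReal
      = Matrix.fromBlocks A' Bt' (-B') (0 : Matrix (Fin m) (Fin m) ℂ) := by
    rw [Matrix.fromBlocks_map, h21, h0]
  have h12 : (A * Bᵀ).map Complex.ofReal = A' * Bt' := by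
    ext i j; simp [A', Bt', Matrix.mul_apply]
  have h22 : (α • (1 : Matrix (Fin m) (Fin m) ℝ)).map Complex.ofReal
      = (α : ℂ) • (1 : Matrix (Fin m) (Fin m) ℂ) := by
    ext i j
    simp only [Matrix.map_apply, Matrix.smul_apply, Matrix.one_apply, smul_eq_mul]
    split <;> simp
  have hmapP : (Matrix.fromBlocks A (A * Bᵀ) (-B) (α • (1 : Matrix (Fin m) (Fin m) ℝ))).map
      Complex.ofReal = Matrix.fromBlocks A' (A' * Bt') (-B')
        ((α : ℂ) • (1 : Matrix (Fin m) (Fin m) ℂ)) := by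
    rw [Matrix.fromBlocks_map, h12, h21, h22]
  rw [hmapA, hmapP, Matrix.fromBlocks_mulVec, Matrix.fromBlocks_mulVec] at heig
  have E1 : A' *ᵥ x + Bt' *ᵥ y = μ • (A' *ᵥ x + (A' * Bt') *ᵥ y) := by
    funext i; have := congrFun heig (Sum.inl i); simpa using this
  have E2 : (-B') *ᵥ x = μ • ((-B') *ᵥ x + ((α : ℂ) • (1 : Matrix (Fin m) (Fin m) ℂ)) *ᵥ y) := by
    funext i; have := congrFun heig (Sum.inr i); simpa using this
  have hid : ∀ z : Fin m → ℂ, ((α : ℂ) • (1 : Matrix (Fin m) (Fin m) ℂ)) *ᵥ z = (α : ℂ) • z := by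
    intro z; simp [Matrix.smul_mulVec]
  rw [hid] at E2
  have goal3 : (μ * (α : ℂ)) • y = (μ - 1) • (B' *ᵥ x) := by
    funext i
    have := congrFun E2 i
    simp only [Pi.smul_apply, Pi.add_apply, Pi.neg_apply, Matrix.neg_mulVec, smul_eq_mul] at this ⊢
    ring_nf
    ring_nf at this
    linear_combination -this
  have goal2 : (μ - 1) • A' *ᵥ x + ((μ • A' - 1) * Bt') *ᵥ y = 0 := by
    have hmul : ((μ • A' - 1) * Bt') *ᵥ y = μ • ((A' * Bt') *ᵥ y) - Bt' *ᵥ y := by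
      rw [Matrix.sub_mul, Matrix.smul_mul, Matrix.sub_mulVec, Matrix.smul_mulVec,
        Matrix.one_mul]
    rw [hmul]
    funext i
    have := congrFun E1 i
    simp only [Pi.smul_apply, Pi.add_apply, Pi.sub_apply, Pi.zero_apply, smul_eq_mul,
      Matrix.smul_mulVec] at this ⊢
    linear_combination -this
  refine ⟨?_, goal2, goal3⟩
  intro hx0
  subst hx0
  have hy0 : y = 0 := by
    by_cases hμ : μ = 0
    · apply transpose_mulVec_complex_eq_zero B hB
      have : Bt' *ᵥ y = μ • ((A' * Bt') *ᵥ y) := by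
        have := E1; simpa using this
      rw [this, hμ, zero_smul]
    · have h0 : (μ * (α : ℂ)) • y = 0 := by
        rw [goal3]; simp
      have hne : μ * (α : ℂ) ≠ 0 := mul_ne_zero hμ (by exact_mod_cast hα.ne')
      have := smul_eq_zero.mp h0
      tauto
  subst hy0
  exact hxy (by funext i; cases i <;> simp)
end

section
/- Let (μ, [x;y]) be an eigenpair of P⁻¹𝒜 as above. If Bx = 0 then μ = 1. -/
open Matrix

/-- Real part of the complex quadratic form of a real matrix. -/
lemma re_quadform {n : ℕ} (A : Matrix (Fin n) (Fin n) ℝ) (x : Fin n → ℂ) :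
    (star x ⬝ᵥ (A.map (Complex.ofReal)) *ᵥ x).re =
      (fun i => (x i).re) ⬝ᵥ A *ᵥ (fun i => (x i).re) +
      (fun i => (x i).im) ⬝ᵥ A *ᵥ (fun i => (x i).im) := by
  simp only [dotProduct, mulVec, Matrix.map_apply, Pi.star_apply, Complex.re_sum,
    Finset.mul_sum, ← Finset.sum_add_distrib]
  refine Finset.sum_congr rfl fun i _ => Finset.sum_congr rfl fun j _ => ?_
  simp only [Complex.star_def, Complex.mul_re, Complex.mul_im, Complex.conj_re, Complex.conj_im,
    Complex.ofReal_re, Complex.ofReal_im]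
  ring

/-- Positive definiteness of the complexification: quadratic form nonzero on nonzero vectors. -/
lemma quadform_ne_zero {n : ℕ} {A : Matrix (Fin n) (Fin n) ℝ} (hA : A.PosDef)
    {x : Fin n → ℂ} (hx : x ≠ 0) :
    star x ⬝ᵥ (A.map (Complex.ofReal)) *ᵥ x ≠ 0 := by
  intro h
  have hre := congrArg Complex.re h
  rw [re_quadform] at hre
  simp only [Complex.zero_re] at hre
  set u : Fin n → ℝ := fun i => (x i).re
  set v : Fin n → ℝ := fun i => (x i).im
  have huv : u ≠ 0 ∨ v ≠ 0 := by
    by_contra hc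
    push_neg at hc
    apply hx
    funext i
    have h1 := congrFun hc.1 i
    have h2 := congrFun hc.2 i
    exact Complex.ext h1 h2
  have hu : 0 ≤ u ⬝ᵥ A *ᵥ u := by
    have := hA.posSemidef.dotProduct_mulVec_nonneg u
    simpa using this
  have hv : 0 ≤ v ⬝ᵥ A *ᵥ v := by
    have := hA.posSemidef.dotProduct_mulVec_nonneg v
    simpa using this
  rcases huv with h' | h'
  · have := hA.dotProduct_mulVec_pos h'
    simp only [star_trivial] at this
    linarith [hre, hv]
  · have := hA.dotProduct_mulVec_pos h'
    simp only [star_trivial] at this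
    linarith [hre, hu]

/-- Let `(μ, [x;y])` be an eigenpair of `P⁻¹𝒜`. If `Bx = 0` then `μ = 1`. -/
theorem REHSS_eigenvalue_one_of_Bx_eq_zero (n m : ℕ)
    (A : Matrix (Fin n) (Fin n) ℝ) (B : Matrix (Fin m) (Fin n) ℝ)
    (hA : A.PosDef) (hB : B.rank = m) (α : ℝ) (hα : 0 < α)
    (P 𝒜 : Matrix (Fin n ⊕ Fin m) (Fin n ⊕ Fin m) ℝ)
    (hP : P = Matrix.fromBlocks A (A * Bᵀ) (-B) (α • (1 : Matrix (Fin m) (Fin m) ℝ)))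
    (h𝒜 : 𝒜 = Matrix.fromBlocks A Bᵀ (-B) (0 : Matrix (Fin m) (Fin m) ℝ))
    (μ : ℂ) (x : Fin n → ℂ) (y : Fin m → ℂ)
    (hxy : Sum.elim x y ≠ 0)
    (heig : (𝒜.map (Complex.ofReal)).mulVec (Sum.elim x y) =
      μ • (P.map (Complex.ofReal)).mulVec (Sum.elim x y))
    (hBx : (B.map (Complex.ofReal)).mulVec x = 0) :
    μ = 1 := by
  subst hP h𝒜
  set A' : Matrix (Fin n) (Fin n) ℂ := A.map (Complex.ofReal) with hA'
  set B' : Matrix (Fin m) (Fin n) ℂ := B.map (Complex.ofReal) with hB'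
  -- rewrite the eigen equation blockwise
  have hmm : ∀ {p q r : ℕ} (M : Matrix (Fin p) (Fin q) ℝ) (N : Matrix (Fin q) (Fin r) ℝ),
      (M * N).map Complex.ofReal = M.map Complex.ofReal * N.map Complex.ofReal := by
    intro p q r M N
    ext i j
    simp [Matrix.mul_apply, Matrix.map_apply]
  have hneg : (-B).map (Complex.ofReal) = -B' := by
    ext i j; simp [hB', Matrix.map_apply]
  have hzero : (0 : Matrix (Fin m) (Fin m) ℝ).map (Complex.ofReal) =
      (0 : Matrix (Fin m) (Fin m) ℂ) := by
    ext i j; simp [Matrix.map_apply]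
  have hsone : (α • (1 : Matrix (Fin m) (Fin m) ℝ)).map (Complex.ofReal) =
      (α : ℂ) • (1 : Matrix (Fin m) (Fin m) ℂ) := by
    ext i j
    simp [Matrix.map_apply, Matrix.smul_apply, Matrix.one_apply]
    split <;> simp
  have htB : Bᵀ.map (Complex.ofReal) = B'ᵀ := Matrix.transpose_map
  have hmapA : (Matrix.fromBlocks A Bᵀ (-B) (0 : Matrix (Fin m) (Fin m) ℝ)).map
      (Complex.ofReal) = Matrix.fromBlocks A' B'ᵀ (-B') 0 := by
    rw [Matrix.fromBlocks_map, htB, hneg, hzero]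
  have hmapP : (Matrix.fromBlocks A (A * Bᵀ) (-B)
      (α • (1 : Matrix (Fin m) (Fin m) ℝ))).map (Complex.ofReal) =
      Matrix.fromBlocks A' (A' * B'ᵀ) (-B') ((α : ℂ) • 1) := by
    rw [Matrix.fromBlocks_map, hmm, htB, hneg, hsone]
  rw [hmapA, hmapP, Matrix.fromBlocks_mulVec, Matrix.fromBlocks_mulVec] at heig
  have hinl : A' *ᵥ x + B'ᵀ *ᵥ y = μ • (A' *ᵥ x + (A' * B'ᵀ) *ᵥ y) := by
    funext i
    have := congrFun heig (Sum.inl i)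
    simpa using this
  have hinr : (-B') *ᵥ x + (0 : Matrix (Fin m) (Fin m) ℂ) *ᵥ y =
      μ • ((-B') *ᵥ x + ((α : ℂ) • (1 : Matrix (Fin m) (Fin m) ℂ)) *ᵥ y) := by
    funext i
    have := congrFun heig (Sum.inr i)
    simpa using this
  have hBx' : B' *ᵥ x = 0 := hBx
  have hinr' : (0 : Fin m → ℂ) = μ • (α : ℂ) • y := by
    have : (-B') *ᵥ x = 0 := by rw [Matrix.neg_mulVec, hBx']; simp
    rw [this] at hinr
    simpa [Matrix.smul_mulVec, Matrix.one_mulVec] using hinr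
  -- A' is invertible
  have hdetA : IsUnit A'.det := by
    have : A'.det = (A.det : ℂ) := by
      exact (RingHom.map_det Complex.ofRealHom A).symm
    rw [this]
    simp only [isUnit_iff_ne_zero, ne_eq, Complex.ofReal_eq_zero]
    exact ne_of_gt hA.det_pos
  have hA'inj : Function.Injective (A'.mulVec) :=
    Matrix.mulVec_injective_iff_isUnit.mpr ((Matrix.isUnit_iff_isUnit_det A').mpr hdetA)
  -- B * Bᵀ is invertible over ℝ, hence over ℂ
  have hBBt : IsUnit (B * Bᵀ) := by
    rw [← Matrix.mulVec_surjective_iff_isUnit]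
    have hrank : (B * Bᵀ).rank = m := by rw [Matrix.rank_self_mul_transpose, hB]
    have htop : LinearMap.range ((B * Bᵀ).mulVecLin) = ⊤ := by
      apply Submodule.eq_top_of_finrank_eq
      rw [← Matrix.rank, hrank]
      simp [Module.finrank_pi]
    intro w
    have : w ∈ LinearMap.range ((B * Bᵀ).mulVecLin) := by rw [htop]; trivial
    obtain ⟨v, hv⟩ := this
    exact ⟨v, hv⟩
  have hBBt' : IsUnit (B' * B'ᵀ) := by
    have hmap : B' * B'ᵀ = (B * Bᵀ).map (Complex.ofReal) := by
      rw [hmm, htB]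
    rw [Matrix.isUnit_iff_isUnit_det] at hBBt ⊢
    have hd : ((B * Bᵀ).map Complex.ofReal).det = ((B * Bᵀ).det : ℂ) :=
      (RingHom.map_det Complex.ofRealHom (B * Bᵀ)).symm
    rw [hmap, hd]
    simp only [isUnit_iff_ne_zero, ne_eq, Complex.ofReal_eq_zero]
    rw [isUnit_iff_ne_zero] at hBBt
    exact hBBt
  have hBBtinj : Function.Injective ((B' * B'ᵀ).mulVec) :=
    Matrix.mulVec_injective_iff_isUnit.mpr hBBt'
  -- star x annihilates B'ᵀ *ᵥ y
  have hstarBt : star x ⬝ᵥ B'ᵀ *ᵥ y = 0 := by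
    rw [Matrix.dotProduct_mulVec]
    have hherm : B'ᴴ = B'ᵀ := by
      ext i j
      simp [Matrix.conjTranspose_apply, Matrix.transpose_apply, hB', Matrix.map_apply]
    have : star x ᵥ* B'ᵀ = 0 := by
      rw [← hherm, ← Matrix.star_mulVec, hBx']
      simp
    rw [this]
    simp
  by_cases hμ : μ = 0
  · -- contradiction: if μ = 0 then x = 0 and y = 0
    exfalso
    subst hμ
    rw [zero_smul] at hinl
    have hq : star x ⬝ᵥ A' *ᵥ x = 0 := by
      have := congrArg (fun v => star x ⬝ᵥ v) hinl
      simpa [dotProduct_add, hstarBt] using this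
    have hx0 : x = 0 := by
      by_contra hx
      exact quadform_ne_zero hA hx hq
    have hBty : B'ᵀ *ᵥ y = 0 := by
      have := hinl
      rw [hx0] at this
      simpa using this
    have hy0 : y = 0 := by
      apply hBBtinj
      rw [← Matrix.mulVec_mulVec, hBty]
      simp
    apply hxy
    rw [hx0, hy0]
    funext i
    cases i <;> rfl
  · -- μ ≠ 0 : then y = 0, and A' x = μ • A' x with x ≠ 0
    have hy0 : y = 0 := by
      funext i
      have := congrFun hinr' i
      simp only [Pi.zero_apply, Pi.smul_apply, smul_eq_mul] at this
      rcases mul_eq_zero.mp this.symm with h | h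
      · exact absurd h hμ
      · rcases mul_eq_zero.mp h with h' | h'
        · exact absurd h' (by simpa using ne_of_gt hα)
        · exact h'
    have hx0 : x ≠ 0 := by
      intro hx
      apply hxy
      rw [hx, hy0]
      funext i
      cases i <;> rfl
    rw [hy0] at hinl
    simp only [Matrix.mulVec_zero, add_zero] at hinl
    have hAx : A' *ᵥ x ≠ 0 := by
      intro h
      apply hx0
      apply hA'inj
      rw [h]
      simp
    obtain ⟨i, hi⟩ := Function.ne_iff.mp hAx
    have := congrFun hinl i
    simp only [Pi.smul_apply, smul_eq_mul] at this
    have hne : (A' *ᵥ x) i ≠ 0 := hi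
    have h1 : (μ - 1) * ((A' *ᵥ x) i) = 0 := by linear_combination -this
    rcases mul_eq_zero.mp h1 with h | h
    · exact sub_eq_zero.mp h
    · exact absurd h hne
end

section
/- The degree of the minimal polynomial of the preconditioned matrix P⁻¹𝒜 is at most m + 1, where P = [[A, ABᵀ],[-B, αI]], 𝒜 = [[A, Bᵀ],[-B, 0]]. Specifically, the polynomial p(x) = (x-1)∏_{i=1}^m (x - μᵢ), with μᵢ the eigenvalues of Â = (αI + BBᵀ)⁻¹BA⁻¹Bᵀ, annihilates P⁻¹𝒜. -/
open Matrix Polynomial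

private lemma pow_fromBlocks {m n : ℕ} (X : Matrix (Fin n) (Fin n) ℝ)
    (K : Matrix (Fin n) (Fin m) ℝ) (D : Matrix (Fin m) (Fin m) ℝ) (k : ℕ) :
    ∃ R, (fromBlocks X K 0 D) ^ k = fromBlocks (X ^ k) R 0 (D ^ k) := by
  induction k with
  | zero => exact ⟨0, by simp [fromBlocks_one]⟩
  | succ k ih =>
    obtain ⟨R, hR⟩ := ih
    refine ⟨X ^ k * K + R * D, ?_⟩
    rw [pow_succ, hR, pow_succ, pow_succ, fromBlocks_multiply]
    simp

private lemma aeval_fromBlocks {m n : ℕ} (X : Matrix (Fin n) (Fin n) ℝ)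
    (K : Matrix (Fin n) (Fin m) ℝ) (D : Matrix (Fin m) (Fin m) ℝ) (p : ℝ[X]) :
    ∃ R, aeval (fromBlocks X K 0 D) p = fromBlocks (aeval X p) R 0 (aeval D p) := by
  induction p using Polynomial.induction_on' with
  | add p q hp hq =>
    obtain ⟨R1, h1⟩ := hp
    obtain ⟨R2, h2⟩ := hq
    refine ⟨R1 + R2, ?_⟩
    rw [map_add, map_add, map_add, h1, h2, fromBlocks_add]
    simp
  | monomial k a =>
    obtain ⟨R, hR⟩ := pow_fromBlocks X K D k
    refine ⟨a • R, ?_⟩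
    simp only [aeval_monomial, hR, Algebra.algebraMap_eq_smul_one, smul_mul_assoc, one_mul,
      fromBlocks_smul, smul_zero]

/-- The degree of the minimal polynomial of `P⁻¹𝒜` is at most `m + 1`.
Specifically, the polynomial `p(x) = (x-1)∏ᵢ(x - μᵢ)`, with `μ₁, …, μ_m` the eigenvalues of
`Â = (αI + BBᵀ)⁻¹BA⁻¹Bᵀ` (with multiplicity, so that `charpoly(Â) = ∏ᵢ(x - μᵢ)`),
annihilates `P⁻¹𝒜`. -/
theorem REHSS_minpoly_degree (n m : ℕ)
    (A : Matrix (Fin n) (Fin n) ℝ) (B : Matrix (Fin m) (Fin n) ℝ)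
    (hA : A.PosDef) (hB : B.rank = m) (hmn : m < n) (α : ℝ) (hα : 0 < α)
    (P 𝒜 : Matrix (Fin n ⊕ Fin m) (Fin n ⊕ Fin m) ℝ)
    (hP : P = Matrix.fromBlocks A (A * Bᵀ) (-B) (α • (1 : Matrix (Fin m) (Fin m) ℝ)))
    (h𝒜 : 𝒜 = Matrix.fromBlocks A Bᵀ (-B) (0 : Matrix (Fin m) (Fin m) ℝ))
    (Ahat : Matrix (Fin m) (Fin m) ℝ)
    (hAhat : Ahat = (α • (1 : Matrix (Fin m) (Fin m) ℝ) + B * Bᵀ)⁻¹ * B * A⁻¹ * Bᵀ)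
    (μ : Fin m → ℝ)
    (hμ : Ahat.charpoly = ∏ i, (X - C (μ i))) :
    (minpoly ℝ (P⁻¹ * 𝒜)).natDegree ≤ m + 1 ∧
    Polynomial.aeval (P⁻¹ * 𝒜) ((X - C 1) * ∏ i, (X - C (μ i))) = 0 := by
  -- S is positive definite
  have hBT : Bᵀ = Bᴴ := by
    ext i j
    simp [conjTranspose_apply]
  have hα1 : (α • (1 : Matrix (Fin m) (Fin m) ℝ)).PosDef := by
    exact Matrix.PosDef.one.smul hα
  have hS : (α • (1 : Matrix (Fin m) (Fin m) ℝ) + B * Bᵀ).PosDef := by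
    rw [hBT]
    exact hα1.add_posSemidef (Matrix.posSemidef_self_mul_conjTranspose B)
  set S : Matrix (Fin m) (Fin m) ℝ := α • (1 : Matrix (Fin m) (Fin m) ℝ) + B * Bᵀ with hSdef
  have hAdet : IsUnit A.det := (Matrix.isUnit_iff_isUnit_det A).mp hA.isUnit
  have hSdet : IsUnit S.det := (Matrix.isUnit_iff_isUnit_det S).mp hS.isUnit
  have hA1 : A * A⁻¹ = 1 := Matrix.mul_nonsing_inv A hAdet
  have hS1 : S * S⁻¹ = 1 := Matrix.mul_nonsing_inv S hSdet
  -- key block identity : S * Ahat = B * A⁻¹ * Bᵀ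
  have hSA : S * Ahat = B * A⁻¹ * Bᵀ := by
    rw [hAhat]
    have h1 : S * (S⁻¹ * B * A⁻¹ * Bᵀ) = (S * S⁻¹) * (B * (A⁻¹ * Bᵀ)) := by
      simp only [Matrix.mul_assoc]
    rw [h1, hS1, Matrix.one_mul, Matrix.mul_assoc]
  have hαA : α • Ahat = B * A⁻¹ * Bᵀ - B * Bᵀ * Ahat := by
    have h2 : α • Ahat + B * Bᵀ * Ahat = B * A⁻¹ * Bᵀ := by
      rw [← hSA, hSdef, Matrix.add_mul, Matrix.smul_mul, Matrix.one_mul]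
    exact eq_sub_of_add_eq h2
  -- the preconditioned matrix is block upper triangular
  set K : Matrix (Fin n) (Fin m) ℝ := A⁻¹ * Bᵀ - Bᵀ * Ahat with hKdef
  set T : Matrix (Fin n ⊕ Fin m) (Fin n ⊕ Fin m) ℝ := fromBlocks 1 K 0 Ahat with hTdef
  have hPT : P * T = 𝒜 := by
    rw [hP, hTdef, h𝒜, fromBlocks_multiply, fromBlocks_inj]
    refine ⟨by simp, ?_, by simp, ?_⟩
    · -- A * K + A * Bᵀ * Ahat = Bᵀ
      rw [hKdef, Matrix.mul_sub, ← Matrix.mul_assoc, hA1, Matrix.one_mul]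
      simp only [Matrix.mul_assoc]
      abel
    · -- -B * K + (α • 1) * Ahat = 0
      rw [hKdef, Matrix.neg_mul, Matrix.mul_sub, Matrix.smul_mul, Matrix.one_mul, hαA]
      simp only [Matrix.mul_assoc]
      abel
  -- P is invertible
  have hPdet : IsUnit P.det := by
    have hUV : P = fromBlocks A 0 (-B) 1 * fromBlocks 1 Bᵀ 0 S := by
      rw [hP, fromBlocks_multiply, fromBlocks_inj]
      refine ⟨by simp, by simp, by simp, ?_⟩
      rw [hSdef]
      simp only [Matrix.neg_mul, Matrix.one_mul]
      abel
    rw [hUV, det_mul, Matrix.det_fromBlocks_zero₁₂, Matrix.det_fromBlocks_zero₂₁]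
    simpa using hAdet.mul hSdet
  have hTeq : P⁻¹ * 𝒜 = T := by
    rw [← hPT, ← Matrix.mul_assoc, Matrix.nonsing_inv_mul P hPdet, one_mul]
  -- the annihilation property
  have hann : Polynomial.aeval (P⁻¹ * 𝒜) ((X - C 1) * ∏ i, (X - C (μ i))) = 0 := by
    rw [hTeq, hTdef]
    simp only [Polynomial.aeval_mul]
    obtain ⟨R, hR⟩ := aeval_fromBlocks (1 : Matrix (Fin n) (Fin n) ℝ) K Ahat
      (∏ i, (X - C (μ i)) : ℝ[X])
    have hq0 : aeval Ahat (∏ i, (X - C (μ i)) : ℝ[X]) = 0 := by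
      rw [← hμ]; exact Ahat.aeval_self_charpoly
    rw [hR, hq0]
    have hX : aeval (fromBlocks (1 : Matrix (Fin n) (Fin n) ℝ) K 0 Ahat) ((X - C 1 : ℝ[X]))
        = fromBlocks 0 K 0 (Ahat - 1) := by
      rw [map_sub, aeval_X, aeval_C, Algebra.algebraMap_eq_smul_one, one_smul,
        ← fromBlocks_one]
      ext (i | i) (j | j) <;>
        simp [Matrix.sub_apply, Matrix.fromBlocks]
    rw [hX, fromBlocks_multiply]
    simp [fromBlocks_zero]
  refine ⟨?_, hann⟩
  -- degree bound
  have hqmonic : (∏ i, (X - C (μ i)) : ℝ[X]).Monic :=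
    monic_prod_of_monic _ _ fun i _ => monic_X_sub_C _
  have hpmonic : ((X - C (1:ℝ)) * ∏ i, (X - C (μ i))).Monic := (monic_X_sub_C 1).mul hqmonic
  have hdvd : minpoly ℝ (P⁻¹ * 𝒜) ∣ (X - C 1) * ∏ i, (X - C (μ i)) := minpoly.dvd ℝ _ hann
  have hdeg : ((X - C (1:ℝ)) * ∏ i, (X - C (μ i))).natDegree = m + 1 := by
    rw [natDegree_mul (X_sub_C_ne_zero 1) hqmonic.ne_zero, natDegree_X_sub_C]
    have h3 : (∏ i, (X - C (μ i)) : ℝ[X]).natDegree = m := by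
      rw [← hμ, Matrix.charpoly_natDegree_eq_dim, Fintype.card_fin]
    omega
  calc (minpoly ℝ (P⁻¹ * 𝒜)).natDegree ≤ ((X - C (1:ℝ)) * ∏ i, (X - C (μ i))).natDegree :=
        natDegree_le_of_dvd hdvd hpmonic.ne_zero
    _ = m + 1 := hdeg
end

section
/- Algorithm correctness: given r₁ ∈ ℝ^n, r₂ ∈ ℝ^m, let w₁ = A⁻¹r₁, w₂ = (αI + BBᵀ)⁻¹(Bw₁ + r₂), z₂ = w₂, z₁ = w₁ - Bᵀw₂. Then P[z₁; z₂] = [r₁; r₂], where P = [[A, ABᵀ],[-B, αI]]. -/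
open Matrix

/-- Algorithm correctness. Given `r₁ ∈ ℝ^n`, `r₂ ∈ ℝ^m`, set `w₁ = A⁻¹r₁`,
`w₂ = (αI + BBᵀ)⁻¹(Bw₁ + r₂)`, `z₂ = w₂`, `z₁ = w₁ - Bᵀw₂`. Then `P[z₁; z₂] = [r₁; r₂]`,
where `P = [[A, ABᵀ],[-B, αI]]`. -/
theorem REHSS_algorithm_correctness (n m : ℕ)
    (A : Matrix (Fin n) (Fin n) ℝ) (B : Matrix (Fin m) (Fin n) ℝ)
    (hA : A.PosDef) (hB : B.rank = m) (α : ℝ) (hα : 0 < α)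
    (P : Matrix (Fin n ⊕ Fin m) (Fin n ⊕ Fin m) ℝ)
    (hP : P = Matrix.fromBlocks A (A * Bᵀ) (-B) (α • (1 : Matrix (Fin m) (Fin m) ℝ)))
    (r₁ : Fin n → ℝ) (r₂ : Fin m → ℝ)
    (w₁ : Fin n → ℝ) (hw₁ : w₁ = A⁻¹.mulVec r₁)
    (w₂ : Fin m → ℝ)
    (hw₂ : w₂ = (α • (1 : Matrix (Fin m) (Fin m) ℝ) + B * Bᵀ)⁻¹.mulVec (B.mulVec w₁ + r₂))
    (z₁ : Fin n → ℝ) (hz₁ : z₁ = w₁ - Bᵀ.mulVec w₂)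
    (z₂ : Fin m → ℝ) (hz₂ : z₂ = w₂) :
    P.mulVec (Sum.elim z₁ z₂) = Sum.elim r₁ r₂ := by
  have hSone : (α • (1 : Matrix (Fin m) (Fin m) ℝ)).PosDef := by
    rw [smul_one_eq_diagonal]
    exact posDef_diagonal_iff.mpr fun _ => hα
  have hS : (α • (1 : Matrix (Fin m) (Fin m) ℝ) + B * Bᵀ).PosDef := by
    have : (B * Bᵀ).PosSemidef := by
      simpa using posSemidef_self_mul_conjTranspose B
    exact hSone.add_posSemidef this
  -- invertibility
  have hAunit : IsUnit A := hA.isUnit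
  have hSunit : IsUnit (α • (1 : Matrix (Fin m) (Fin m) ℝ) + B * Bᵀ) := hS.isUnit
  have hAw : A.mulVec w₁ = r₁ := by
    rw [hw₁, mulVec_mulVec, Matrix.mul_nonsing_inv _ ((Matrix.isUnit_iff_isUnit_det A).mp hAunit),
      one_mulVec]
  have hSw : (α • (1 : Matrix (Fin m) (Fin m) ℝ) + B * Bᵀ).mulVec w₂ = B.mulVec w₁ + r₂ := by
    rw [hw₂, mulVec_mulVec, Matrix.mul_nonsing_inv _ ((Matrix.isUnit_iff_isUnit_det _).mp hSunit),
      one_mulVec]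
  rw [hP, hz₁, hz₂, fromBlocks_mulVec]
  ext i
  cases i with
  | inl i =>
    simp only [Sum.elim_inl, Sum.elim_comp_inl, Sum.elim_comp_inr]
    have : A.mulVec (w₁ - Bᵀ.mulVec w₂) + (A * Bᵀ).mulVec w₂ = r₁ := by
      rw [mulVec_sub, ← mulVec_mulVec]
      rw [sub_add_cancel, hAw]
    rw [this]
  | inr i =>
    simp only [Sum.elim_inr, Sum.elim_comp_inl, Sum.elim_comp_inr]
    have : (-B).mulVec (w₁ - Bᵀ.mulVec w₂) + (α • (1 : Matrix (Fin m) (Fin m) ℝ)).mulVec w₂ = r₂ := by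
      have := hSw
      rw [add_mulVec, ← mulVec_mulVec] at this
      rw [neg_mulVec, mulVec_sub]
      have h2 : (α • (1 : Matrix (Fin m) (Fin m) ℝ)).mulVec w₂ = B.mulVec w₁ + r₂ - B.mulVec (Bᵀ.mulVec w₂) := by
        rw [← this]; abel
      rw [h2]; abel
    rw [this]
end
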